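/- Let G be a graph and r ≥ 1, and let H be an r-transitive fraternal augmentation of (an orientation of) G with maximum in-degree at most d. Then the weak r-colouring number of G is at most 2(d+1)². -/

import Mathlib

/-- `IsTFA D H`: `H` is a (tight) 1-transitive fraternal augmentation of the
directed graph `D`. -/
def IsTFA {V : Type*} (D H : V → V → Prop) : Prop :=
  (∀ u v, D u v → H u v) ∧
  (∀ u w v, D u w → D w v → H u v) ∧
  (∀ u v w, u ≠ v → D u w → D v w → H u v ∨ H v u)

/-- `IsAug D r H`: `H` is an `r`-transitive fraternal augmentation of `D`. -/
inductive IsAug {V : Type*} (D : V → V → Prop) : ℕ → (V → V → Prop) → Prop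
  | zero : IsAug D 0 D
  | succ {n : ℕ} {H H' : V → V → Prop} :
      IsAug D n H → IsTFA H H' → IsAug D (n + 1) H'

/-!
Order `V` by repeatedly deleting a vertex with at most `2d` neighbours in `H` among the remaining
ones; one exists because in-degrees are at most `d`. If `u` is weakly `r`-reachable from `v`
along a walk `p`, the key property of augmentations makes `u` an `H`-neighbour of `v`, or gives a
common `H`-in-neighbour `x` of `u` and `v` on `p`; as no vertex of `p` lies below `u`, `u` is then
an earlier `H`-neighbour of one of the at most `d` in-neighbours of `v`. This leaves at most
`1 + 2d + d · 2d ≤ 2(d+1)²` candidates.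
-/

open Finset Relation

theorem Set.ncard_biUnion_le_mul {ι α : Type*} {s : Set ι} (hs : s.Finite) (t : ι → Set α)
    {k : ℕ} (ht : ∀ i ∈ s, (t i).ncard ≤ k) : (⋃ i ∈ s, t i).ncard ≤ s.ncard * k := calc
  (⋃ i ∈ s, t i).ncard = (⋃ i ∈ hs.toFinset, t i).ncard := by simp
  _ ≤ ∑ i ∈ hs.toFinset, (t i).ncard := hs.toFinset.set_ncard_biUnion_le t
  _ ≤ hs.toFinset.card * k := sum_le_card_nsmul _ _ _ fun i hi => ht i (by simpa using hi)
  _ = s.ncard * k := by rw [Set.ncard_eq_toFinset_card s hs]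

section Augmentation

variable {V : Type*} {D H H' H₀ H₁ H₂ : V → V → Prop}

theorem IsAug.le {n : ℕ} (h : IsAug D n H) {u v : V} (huv : D u v) : H u v := by
  induction h with
  | zero => exact huv
  | succ _ ht ih => exact ht.1 _ _ ih

/-- Prepending an edge `a m` to a walk from `m` to `b`. The common in-neighbour is kept one
augmentation level below, so that the transitive and fraternal rules can still act on it. -/
theorem IsTFA.arc_or_exists_common_inNeighbor_cons (h₀₁ : IsTFA H₀ H₁) (h₁₂ : IsTFA H₁ H₂)
    {S : Set V} {a m b : V} (hab : a ≠ b) (hm : m ∈ S) (ham : SymmGen H₀ a m)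
    (hmb : H₁ m b ∨ H₁ b m ∨ ∃ x ∈ S, H₀ x m ∧ H₀ x b) :
    H₂ a b ∨ H₂ b a ∨ ∃ x ∈ S, H₁ x a ∧ H₁ x b := by
  rcases ham with ham | hma
  · rcases hmb with hmb | hbm | ⟨x, hx, hxm, hxb⟩
    · exact Or.inl (h₁₂.2.1 a m b (h₀₁.1 _ _ ham) hmb)
    · exact (h₁₂.2.2 a b m hab (h₀₁.1 _ _ ham) hbm).imp_right Or.inl
    · rcases eq_or_ne x a with rfl | hxa
      · exact Or.inl (h₁₂.1 _ _ (h₀₁.1 _ _ hxb))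
      · rcases h₀₁.2.2 x a m hxa hxm ham with hxa | hax
        · exact Or.inr (Or.inr ⟨x, hx, hxa, h₀₁.1 _ _ hxb⟩)
        · exact Or.inl (h₁₂.2.1 a x b hax (h₀₁.1 _ _ hxb))
  · rcases hmb with hmb | hbm | ⟨x, hx, hxm, hxb⟩
    · exact Or.inr (Or.inr ⟨m, hm, h₀₁.1 _ _ hma, hmb⟩)
    · exact Or.inr (Or.inl (h₁₂.2.1 b m a hbm (h₀₁.1 _ _ hma)))
    · exact Or.inr (Or.inr ⟨x, hx, h₀₁.2.1 x m a hxm hma, h₀₁.1 _ _ hxb⟩)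

variable {G : SimpleGraph V} (hG : ∀ u v, G.Adj u v → D u v ∨ D v u)
include hG

theorem IsAug.symmGen_of_adj {n : ℕ} (haug : IsAug D n H) {a b : V} (hab : G.Adj a b) :
    SymmGen H a b :=
  (hG a b hab).imp haug.le haug.le

theorem IsAug.arc_or_exists_common_inNeighbor_of_isTFA {n : ℕ} (haug : IsAug D n H)
    (htfa : IsTFA H H') {a b : V} (hab : a ≠ b) (p : G.Walk a b) (hp : p.length ≤ n + 1) :
    H' a b ∨ H' b a ∨ ∃ x ∈ p.support, H x a ∧ H x b := by
  induction haug generalizing H' a b with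
  | zero =>
    obtain _ | ⟨hadj, q⟩ := p
    · exact absurd rfl hab
    · obtain rfl := q.eq_of_length_eq_zero (by simpa using hp)
      exact ((IsAug.zero.succ htfa).symmGen_of_adj hG hadj).imp_right Or.inl
  | @succ n H₀ H₁ haug₀ htfa₀ ih =>
    obtain _ | ⟨hadj, q⟩ := p
    · exact absurd rfl hab
    rename_i m
    rcases eq_or_ne m b with rfl | hmb
    · exact ((haug₀.succ htfa₀ |>.succ htfa).symmGen_of_adj hG hadj).imp_right Or.inl
    obtain h | h | ⟨x, hx, hxa, hxb⟩ :=
      htfa₀.arc_or_exists_common_inNeighbor_cons htfa hab q.start_mem_support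
        (haug₀.symmGen_of_adj hG hadj) (ih htfa₀ hmb q (by simpa using hp))
    · exact Or.inl h
    · exact Or.inr (Or.inl h)
    · exact Or.inr (Or.inr ⟨x, List.mem_cons_of_mem _ hx, hxa, hxb⟩)

theorem IsAug.arc_or_exists_common_inNeighbor {r : ℕ} (haug : IsAug D r H) {a b : V}
    (hab : a ≠ b) (p : G.Walk a b) (hp : p.length ≤ r) :
    H a b ∨ H b a ∨ ∃ x ∈ p.support, H x a ∧ H x b := by
  cases haug with
  | zero => exact absurd (p.eq_of_length_eq_zero (Nat.le_zero.mp hp)) hab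
  | succ haug₀ htfa =>
    exact (haug₀.arc_or_exists_common_inNeighbor_of_isTFA hG htfa hab p hp).imp_right
      (.imp_right fun ⟨x, hx, hxa, hxb⟩ => ⟨x, hx, htfa.1 _ _ hxa, htfa.1 _ _ hxb⟩)

end Augmentation

section Degeneracy

variable {V : Type*}

def backNbrs (lt R : V → V → Prop) (v : V) : Set V :=
  {u | lt u v ∧ R u v}

theorem exists_mem_ncard_symmGen_le [Finite V] {H : V → V → Prop} {d : ℕ}
    (hindeg : ∀ v, {u | H u v}.ncard ≤ d) (s : Finset V) (hs : s.Nonempty) :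
    ∃ v ∈ s, {u ∈ (s : Set V) | SymmGen H u v}.ncard ≤ 2 * d := by
  classical
  have hin (v : V) : #{u ∈ s | H u v} ≤ d := by
    rw [← Set.ncard_coe_finset]
    exact (Set.ncard_le_ncard (fun u hu => (mem_filter.1 hu).2)).trans (hindeg v)
  have hsum : ∑ v ∈ s, #{u ∈ s | SymmGen H u v} ≤ ∑ _v ∈ s, 2 * d := calc
    ∑ v ∈ s, #{u ∈ s | SymmGen H u v}
      ≤ ∑ v ∈ s, (#{u ∈ s | H u v} + #{u ∈ s | H v u}) :=
        sum_le_sum fun v _ => (card_le_card fun u hu => by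
          obtain ⟨hus, h | h⟩ := mem_filter.1 hu
          exacts [mem_union_left _ (mem_filter.2 ⟨hus, h⟩),
            mem_union_right _ (mem_filter.2 ⟨hus, h⟩)]).trans (card_union_le _ _)
    _ = ∑ v ∈ s, #{u ∈ s | H u v} + ∑ v ∈ s, #{u ∈ s | H u v} := by
        rw [sum_add_distrib]
        exact congrArg _ (sum_card_bipartiteAbove_eq_sum_card_bipartiteBelow H)
    _ ≤ ∑ _v ∈ s, 2 * d := by
        rw [← two_mul, mul_sum]
        exact sum_le_sum fun v _ => Nat.mul_le_mul_left 2 (hin v)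
  obtain ⟨v, hv, hle⟩ := exists_le_of_sum_le hs hsum
  exact ⟨v, hv, by rwa [← Set.ncard_coe_finset, coe_filter] at hle⟩

theorem exists_degeneracy_rank {R : V → V → Prop} {k : ℕ}
    (h : ∀ s : Finset V, s.Nonempty → ∃ v ∈ s, {u ∈ (s : Set V) | R u v}.ncard ≤ k)
    (s : Finset V) :
    ∃ f : V → ℕ, Set.InjOn f s ∧ (∀ v ∈ s, f v < #s) ∧
      ∀ v ∈ s, {u ∈ (s : Set V) | f u < f v ∧ R u v}.ncard ≤ k := by
  classical
  induction s using Finset.strongInduction with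
  | H s ih =>
  rcases s.eq_empty_or_nonempty with rfl | hs
  · exact ⟨0, by simp, by simp, by simp⟩
  obtain ⟨w, hw, hwk⟩ := h s hs
  obtain ⟨f, hinj, hlt, hback⟩ := ih _ (erase_ssubset hw)
  set g := Function.update f w #(s.erase w)
  have hg {v : V} (hv : v ∈ s.erase w) : g v = f v :=
    Function.update_of_ne (ne_of_mem_erase hv) ..
  have hgw : g w = #(s.erase w) := Function.update_self ..
  have hlast {v : V} (hv : v ∈ s.erase w) : g v < g w := by rw [hg hv, hgw]; exact hlt v hv
  refine ⟨g, ?_, fun v hv => ?_, fun v hv => ?_⟩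
  · rw [← insert_erase hw, coe_insert, Set.injOn_insert (notMem_erase w s)]
    refine ⟨hinj.congr fun v hv => (hg hv).symm, ?_⟩
    rintro ⟨v, hv, hvw⟩
    exact (hlast hv).ne hvw
  · rcases eq_or_ne v w with rfl | hvw
    · rw [hgw]
      exact card_erase_lt_of_mem hv
    · exact (hlast (mem_erase.2 ⟨hvw, hv⟩)).trans_le (hgw ▸ (card_erase_lt_of_mem hw).le)
  · rcases eq_or_ne v w with rfl | hvw
    · exact hwk.trans' (Set.ncard_le_ncard fun u hu => ⟨hu.1, hu.2.2⟩)
    have hv' : v ∈ s.erase w := mem_erase.2 ⟨hvw, hv⟩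
    refine (hback v hv').trans' (Set.ncard_le_ncard fun u hu => ?_)
    have hu' : u ∈ s.erase w := mem_erase.2 ⟨fun huw => (hlast hv').not_gt (huw ▸ hu.2.1), hu.1⟩
    exact ⟨hu', by rw [← hg hu', ← hg hv']; exact hu.2.1, hu.2.2⟩

theorem exists_isStrictTotalOrder_ncard_backNbrs_le [Finite V] {R : V → V → Prop} {k : ℕ}
    (h : ∀ s : Finset V, s.Nonempty → ∃ v ∈ s, {u ∈ (s : Set V) | R u v}.ncard ≤ k) :
    ∃ lt : V → V → Prop, IsStrictTotalOrder V lt ∧ ∀ v, (backNbrs lt R v).ncard ≤ k := by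
  have := Fintype.ofFinite V
  obtain ⟨f, hinj, -, hback⟩ := exists_degeneracy_rank h univ
  let := LinearOrder.lift' f (Set.injOn_univ.1 (by simpa using hinj))
  exact ⟨(· < ·), inferInstance, fun v =>
    (hback v (mem_univ v)).trans' (Set.ncard_le_ncard fun u hu => ⟨mem_univ u, hu⟩)⟩

end Degeneracy

section WeakReach

variable {V : Type*}

def wreach (G : SimpleGraph V) (lt : V → V → Prop) (r : ℕ) (v : V) : Set V :=
  {u | u = v ∨ (lt u v ∧ ∃ p : G.Walk u v, p.length ≤ r ∧ ∀ x ∈ p.support, ¬ lt x u)}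

/-- A common in-neighbour `x` of `u` and `v` on the walk is not below `u`, so `x = u` or `u` is a
back-neighbour of `x`. -/
theorem wreach_subset {G : SimpleGraph V} {D H lt : V → V → Prop} [IsStrictTotalOrder V lt]
    {r : ℕ} (hG : ∀ u v, G.Adj u v → D u v ∨ D v u) (haug : IsAug D r H) (v : V) :
    wreach G lt r v ⊆
      insert v (backNbrs lt (SymmGen H) v ∪ ⋃ x ∈ {x | H x v}, backNbrs lt (SymmGen H) x) := by
  rintro u (rfl | ⟨huv, p, hp, hmin⟩)
  · exact Set.mem_insert _ _
  refine Or.inr ?_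
  obtain h | h | ⟨x, hx, hxu, hxv⟩ :=
    haug.arc_or_exists_common_inNeighbor hG (ne_of_irrefl huv) p hp
  · exact Or.inl ⟨huv, Or.inl h⟩
  · exact Or.inl ⟨huv, Or.inr h⟩
  rcases eq_or_ne x u with rfl | hxu'
  · exact Or.inl ⟨huv, Or.inl hxv⟩
  have hux : lt u x := (trichotomous_of lt u x).resolve_right (not_or.2 ⟨hxu'.symm, hmin x hx⟩)
  exact Or.inr (Set.mem_biUnion hxv ⟨hux, Or.inr hxu⟩)

end WeakReach

theorem wcol_le_of_aug_general {V : Type*} [Fintype V] (G : SimpleGraph V)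
    (D H : V → V → Prop) (r d : ℕ)
    (horient : ∀ u v, G.Adj u v ↔ (D u v ∨ D v u))
    (haug : IsAug D r H)
    (hindeg : ∀ v, {u | H u v}.ncard ≤ d) :
    ∃ lt : V → V → Prop, IsStrictTotalOrder V lt ∧
      ∀ v : V,
        {u | u = v ∨ (lt u v ∧ ∃ p : G.Walk u v, p.length ≤ r ∧
          ∀ x ∈ p.support, ¬ lt x u)}.ncard ≤ 2 * (d + 1) ^ 2 := by
  obtain ⟨lt, hlt, hback⟩ :=
    exists_isStrictTotalOrder_ncard_backNbrs_le (exists_mem_ncard_symmGen_le hindeg)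
  refine ⟨lt, hlt, fun v => ?_⟩
  have hunion := Set.ncard_biUnion_le_mul (Set.toFinite {x | H x v})
    (backNbrs lt (SymmGen H)) fun x _ => hback x
  calc (wreach G lt r v).ncard
      ≤ (insert v (backNbrs lt (SymmGen H) v ∪
          ⋃ x ∈ {x | H x v}, backNbrs lt (SymmGen H) x)).ncard :=
        Set.ncard_le_ncard (wreach_subset (fun u v => (horient u v).1) haug v)
    _ ≤ (backNbrs lt (SymmGen H) v).ncard + {x | H x v}.ncard * (2 * d) + 1 :=
        (Set.ncard_insert_le _ _).trans (by grw [Set.ncard_union_le, hunion])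
    _ ≤ 2 * d + d * (2 * d) + 1 := by grw [hback v, hindeg v]
    _ ≤ 2 * (d + 1) ^ 2 := by nlinarith

/-- Let `H` be an `r`-transitive fraternal augmentation of an
orientation of `G` with maximum in-degree at most `d`. Then the weak `r`-colouring
number of `G` is at most `2(d+1)^2`: there is a strict linear order `lt` on the
vertices such that for every vertex `v` the set `wreach_r[G,lt,v]` (consisting of
`v` together with all `u` below `v` joined to `v` by a path of length at most `r`
with no vertex below `u`) has at most `2(d+1)^2` elements. -/
theorem wcol_le_of_aug {V : Type*} [Fintype V] (G : SimpleGraph V)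
    (D H : V → V → Prop) (r d : ℕ) (hr : 1 ≤ r)
    (horient : ∀ u v, G.Adj u v ↔ (D u v ∨ D v u))
    (hnd : ∀ u v, ¬ (D u v ∧ D v u))
    (haug : IsAug D r H)
    (hindeg : ∀ v, {u | H u v}.ncard ≤ d) :
    ∃ lt : V → V → Prop, IsStrictTotalOrder V lt ∧
      ∀ v : V,
        {u | u = v ∨ (lt u v ∧ ∃ p : G.Walk u v, p.length ≤ r ∧
          ∀ x ∈ p.support, ¬ lt x u)}.ncard ≤ 2 * (d + 1) ^ 2 :=
  wcol_le_of_aug_general G D H r d horient haug hindeg
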